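/- arXiv:1612.04268 — 8 statements merged into one kernel-verified Lean document; each statement's English description precedes it below -/
import Mathlib

section
/- If C is a nonzero F_{q^m}-linear code in F_{q^m}^n of dimension k with rank-metric minimum distance d, and n ≤ m, then d ≤ n - k + 1. -/
open Module

/-- The rank of a vector `v ∈ L^n` over the subfield `K`: the dimension over `K`
of the `K`-span of its coordinates. -/
noncomputable def vrank (K : Type*) [Field K] {L : Type*} [Field L] [Algebra K L] {n : ℕ}
    (v : Fin n → L) : ℕ :=
  finrank K (Submodule.span K (Set.range v))

/-- `d` is the minimum rank-metric distance of the set `S` of vectors. -/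
def VecMinDist (K : Type*) [Field K] {L : Type*} [Field L] [Algebra K L] {n : ℕ}
    (S : Set (Fin n → L)) (d : ℕ) : Prop :=
  (∃ v ∈ S, v ≠ 0 ∧ vrank K v = d) ∧ ∀ v ∈ S, v ≠ 0 → d ≤ vrank K v

/-- The dual of a code `C ≤ L^n` with respect to the standard inner product. -/
def vecDual {L : Type*} [Field L] {n : ℕ} (C : Submodule L (Fin n → L)) :
    Set (Fin n → L) :=
  {w | ∀ v ∈ C, ∑ i, v i * w i = 0}

/-- **Singleton bound for rank-metric codes.** If `C ≤ F_{q^m}^n` is a nonzero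
`F_{q^m}`-linear code of dimension `k` with minimum rank distance `d` and `n ≤ m`,
then `d ≤ n - k + 1`. -/
theorem singleton_bound_vector
    (K L : Type*) [Field K] [Fintype K] [Field L] [Algebra K L]
    (n m k d : ℕ) (hnm : n ≤ m) (hdim : finrank K L = m)
    (C : Submodule L (Fin n → L)) (hC : C ≠ ⊥) (hk : finrank L C = k)
    (hd : VecMinDist K (C : Set (Fin n → L)) d) :
    d ≤ n - k + 1 := by
  classical
  have hfd : FiniteDimensional L C := FiniteDimensional.finiteDimensional_submodule C
  have hk1 : 1 ≤ k := by
    rw [← hk]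
    exact Submodule.one_le_finrank_iff.mpr hC
  have hkn : k ≤ n := by
    calc k = finrank L C := hk.symm
      _ ≤ finrank L (Fin n → L) := Submodule.finrank_le C
      _ = n := by simp
  -- projection onto first k-1 coordinates, restricted to C
  have hle : k - 1 ≤ n := by omega
  let f : C →ₗ[L] (Fin (k-1) → L) :=
    (LinearMap.funLeft L L (Fin.castLE hle)).comp C.subtype
  have hker : LinearMap.ker f ≠ ⊥ := by
    intro hbot
    have h1 := LinearMap.finrank_range_add_finrank_ker f
    have h2 : finrank L (LinearMap.range f) ≤ k - 1 := by
      calc finrank L (LinearMap.range f) ≤ finrank L (Fin (k-1) → L) :=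
        Submodule.finrank_le _
        _ = k - 1 := by simp
    rw [hbot] at h1
    simp [finrank_bot, hk] at h1
    omega
  obtain ⟨x, hx, hx0⟩ := Submodule.exists_mem_ne_zero_of_ne_bot hker
  set v : Fin n → L := (x : Fin n → L) with hv
  have hvC : v ∈ C := x.2
  have hvne : v ≠ 0 := by
    intro h
    apply hx0
    exact Subtype.ext h
  have hzero : ∀ i : Fin n, (i : ℕ) < k - 1 → v i = 0 := by
    intro i hi
    have := LinearMap.mem_ker.mp hx
    have h2 : f x ⟨i, hi⟩ = 0 := by rw [this]; rfl
    simpa [f, LinearMap.funLeft, Fin.castLE] using h2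
  -- bound on rank of v
  have hrank : vrank K v ≤ n - (k - 1) := by
    let g : Fin (n - (k-1)) → Fin n := fun j => ⟨k - 1 + j, by omega⟩
    set img : Finset L := Finset.image (v ∘ g) Finset.univ with himg
    have hsub : Set.range v ⊆ insert 0 (↑img : Set L) := by
      rintro _ ⟨i, rfl⟩
      by_cases hi : (i : ℕ) < k - 1
      · left; exact hzero i hi
      · right
        simp only [himg, Finset.coe_image, Set.mem_image, Finset.mem_coe]
        refine ⟨⟨(i : ℕ) - (k-1), by omega⟩, by simp, ?_⟩
        simp only [Function.comp, g]
        congr 1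
        ext
        simp
        omega
    have h0 : Submodule.span K (Set.range v) ≤ Submodule.span K (↑img : Set L) := by
      exact le_trans (Submodule.span_mono hsub) (le_of_eq Submodule.span_insert_zero)
    calc vrank K v ≤ finrank K (Submodule.span K (↑img : Set L)) :=
          Submodule.finrank_mono h0
      _ ≤ img.card := finrank_span_finset_le_card _
      _ ≤ (Finset.univ : Finset (Fin (n - (k-1)))).card := Finset.card_image_le
      _ = n - (k-1) := by simp
  have := hd.2 v hvC hvne
  omega
end

section
/- Let C be a nonzero F_q-linear code in the space of n×m matrices over F_q of dimension t, with n ≤ m. Then d(C) ≤ n - ⌈t/m⌉ + 1, i.e. the rank defect rdef(C) = n - ⌈t/m⌉ + 1 - d(C) is nonnegative. -/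
open Module Matrix

/-- `d` is the minimum rank-metric distance of the set `S` of `n × m` matrices. -/
def MatMinDist {Fq : Type*} [Field Fq] {n m : ℕ}
    (S : Set (Matrix (Fin n) (Fin m) Fq)) (d : ℕ) : Prop :=
  (∃ A ∈ S, A ≠ 0 ∧ A.rank = d) ∧ ∀ A ∈ S, A ≠ 0 → d ≤ A.rank

/-- The dual of a matrix code with respect to the trace bilinear form
`⟨B, A⟩ = Tr(B Aᵀ)`. -/
def matDual {Fq : Type*} [Field Fq] {n m : ℕ}
    (C : Submodule Fq (Matrix (Fin n) (Fin m) Fq)) : Set (Matrix (Fin n) (Fin m) Fq) :=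
  {B | ∀ A ∈ C, Matrix.trace (B * Aᵀ) = 0}

/-- A nonzero matrix over a field has positive rank. -/
lemma rank_pos_of_ne_zero {Fq : Type*} [Field Fq] {n m : ℕ}
    {A : Matrix (Fin n) (Fin m) Fq} (hA : A ≠ 0) : 1 ≤ A.rank := by
  by_contra h
  have h0 : A.rank = 0 := by omega
  rw [Matrix.rank, Module.finrank_eq_zero_iff] at h0
  apply hA
  ext i j
  have := h0 ⟨A.mulVec (Pi.single j 1), ⟨Pi.single j 1, rfl⟩⟩
  obtain ⟨c, hc, hcz⟩ := this
  have hz : A.mulVec (Pi.single j 1) = 0 := by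
    have := congrArg Subtype.val hcz
    simpa using smul_right_injective _ hc (by simpa using hcz)
  have := congrFun hz i
  simpa [Matrix.mulVec_single] using this

/-- **Singleton bound / nonnegativity of the rank defect** for `F_q`-linear matrix
codes: if `C` is a nonzero `F_q`-linear code of `n × m` matrices of dimension `t`
with `n ≤ m` and minimum distance `d`, then `d ≤ n - ⌈t/m⌉ + 1`
(stated additively as `d + ⌈t/m⌉ ≤ n + 1`, i.e. `rdef(C) = n - ⌈t/m⌉ + 1 - d ≥ 0`). -/
theorem singleton_bound_matrix
    (Fq : Type*) [Field Fq] [Fintype Fq]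
    (n m t d : ℕ) (hnm : n ≤ m)
    (C : Submodule Fq (Matrix (Fin n) (Fin m) Fq)) (hC : C ≠ ⊥)
    (ht : finrank Fq C = t)
    (hd : MatMinDist (C : Set (Matrix (Fin n) (Fin m) Fq)) d) :
    d + t ⌈/⌉ m ≤ n + 1 := by
  obtain ⟨⟨A₀, hA₀C, hA₀ne, hA₀rank⟩, hmin⟩ := hd
  rcases Nat.eq_zero_or_pos m with hm | hm
  · subst hm
    exact absurd (by ext i j; exact j.elim0) hA₀ne
  have hd1 : 1 ≤ d := hA₀rank ▸ rank_pos_of_ne_zero hA₀ne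
  have hdn : d ≤ n := by
    have := A₀.rank_le_card_height
    simpa [hA₀rank] using this
  set k := n + 1 - d with hk
  have hkn : k ≤ n := by omega
  -- projection to the first k rows
  let φ : Matrix (Fin n) (Fin m) Fq →ₗ[Fq] Matrix (Fin k) (Fin m) Fq :=
    LinearMap.funLeft Fq (Fin m → Fq) (Fin.castLE hkn)
  -- projection to the first k coordinates of Fq^n
  let π : (Fin n → Fq) →ₗ[Fq] (Fin k → Fq) :=
    LinearMap.funLeft Fq Fq (Fin.castLE hkn)
  have hπsurj : Function.Surjective π :=
    LinearMap.funLeft_surjective_of_injective Fq Fq _ (Fin.castLE_injective hkn)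
  have hker : finrank Fq (LinearMap.ker π) = n - k := by
    have h1 := LinearMap.finrank_range_add_finrank_ker π
    have h2 : LinearMap.range π = ⊤ := LinearMap.range_eq_top.mpr hπsurj
    rw [h2] at h1
    simp only [finrank_top, Module.finrank_fin_fun] at h1
    omega
  -- φ is injective on C
  have hinj : Function.Injective (φ.comp C.subtype) := by
    rw [← LinearMap.ker_eq_bot, LinearMap.ker_eq_bot']
    rintro ⟨A, hAC⟩ hA0
    by_contra hAne
    have hAne' : A ≠ 0 := by
      intro h; exact hAne (Subtype.ext h)
    have hle : d ≤ A.rank := hmin A hAC hAne'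
    -- A has its first k rows zero, so its column space lies in ker π
    have hrows : ∀ i : Fin k, A (Fin.castLE hkn i) = 0 := by
      intro i
      have h' : φ A = 0 := hA0
      exact congrFun h' i
    have hsub : LinearMap.range A.mulVecLin ≤ LinearMap.ker π := by
      rintro x ⟨v, rfl⟩
      simp only [LinearMap.mem_ker]
      funext i
      simp only [π, LinearMap.funLeft_apply, Matrix.mulVecLin_apply, Matrix.mulVec,
        dotProduct]
      simp [hrows i]
    have hrk : A.rank ≤ n - k := by
      have := Submodule.finrank_mono hsub
      rwa [hker] at this
    omega
  -- hence t ≤ k * m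
  have htk : t ≤ k * m := by
    have h1 : finrank Fq C = finrank Fq (LinearMap.range (φ.comp C.subtype)) :=
      (LinearMap.finrank_range_of_inj hinj).symm
    have h2 : finrank Fq (LinearMap.range (φ.comp C.subtype)) ≤
        finrank Fq (Matrix (Fin k) (Fin m) Fq) :=
      Submodule.finrank_le _
    have h3 : finrank Fq (Matrix (Fin k) (Fin m) Fq) = k * m := by
      rw [Module.finrank_matrix]
      simp
    omega
  have hceil : t ⌈/⌉ m ≤ k := by
    rw [Nat.ceilDiv_eq_add_pred_div]
    have hkm : (k + 1) * m = k * m + m := by ring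
    have : t + m - 1 < (k + 1) * m := by omega
    have := Nat.div_lt_iff_lt_mul hm |>.mpr this
    omega
  omega
end

section
/- If G ≤ F_{q^m}^n is a k-dimensional MRD code (i.e. d(G) = n - k + 1) with n ≤ m, then the extended code Ĝ ≤ F_{q^m}^{n+1} is an AMRD code: rdef(Ĝ) = (n+1) - k + 1 - d(Ĝ) = 1, and moreover the dual code Ĝ^⊥ ≤ F_{q^m}^{n+1} has minimum distance 1. -/
open Module

/-- The dual of a *set* of vectors with respect to the standard inner product. -/
def setDual {L : Type*} [Field L] {N : ℕ} (S : Set (Fin N → L)) : Set (Fin N → L) :=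
  {w | ∀ v ∈ S, ∑ i, v i * w i = 0}

lemma span_snoc_aux (K : Type*) [Field K] {L : Type*} [Field L] [Algebra K L] {n : ℕ}
    (c : Fin n → L) :
    Submodule.span K (Set.range (Fin.snoc c (-∑ i, c i) : Fin (n + 1) → L)) =
      Submodule.span K (Set.range c) := by
  have hr : Set.range (Fin.snoc c (-∑ i, c i) : Fin (n + 1) → L) =
      insert (-∑ i, c i) (Set.range c) := by
    ext x
    constructor
    · rintro ⟨j, rfl⟩
      refine Fin.lastCases ?_ ?_ j
      · simp
      · intro i; simp
    · rintro (rfl | ⟨i, rfl⟩)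
      · exact ⟨Fin.last n, by simp⟩
      · exact ⟨Fin.castSucc i, by simp⟩
  rw [hr]
  apply Submodule.span_insert_eq_span
  exact neg_mem (Submodule.sum_mem _ fun i _ => Submodule.subset_span ⟨i, rfl⟩)

lemma vrank_pos_of_ne_zero (K : Type*) [Field K] {L : Type*} [Field L] [Algebra K L] {n : ℕ}
    {v : Fin n → L} (hv : v ≠ 0) : 1 ≤ vrank K v := by
  obtain ⟨i, hi⟩ : ∃ i, v i ≠ 0 := by
    by_contra h; push_neg at h; exact hv (funext h)
  have hfd : FiniteDimensional K (Submodule.span K (Set.range v)) :=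
    FiniteDimensional.span_of_finite K (Set.finite_range v)
  have hmem : v i ∈ Submodule.span K (Set.range v) := Submodule.subset_span ⟨i, rfl⟩
  have hne : Submodule.span K (Set.range v) ≠ ⊥ := by
    intro h
    rw [h, Submodule.mem_bot] at hmem
    exact hi hmem
  have : Submodule.span K (Set.range v) ≠ ⊥ → 0 < finrank K (Submodule.span K (Set.range v)) := by
    intro h
    rcases Nat.eq_zero_or_pos (finrank K (Submodule.span K (Set.range v))) with h0 | h0
    · exact absurd (Submodule.finrank_eq_zero.mp h0) h
    · exact h0
  exact this hne

/-- If `G ≤ F_{q^m}^n` is a `k`-dimensional MRD code (`d(G) = n - k + 1`) with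
`n ≤ m`, then the extended code `Ĝ ≤ F_{q^m}^{n+1}` is AMRD, i.e.
`d(Ĝ) = (n+1) - k + 1 - 1 = n + 1 - k`, and its dual has minimum distance `1`. -/
theorem extended_MRD_is_AMRD
    (K L : Type*) [Field K] [Fintype K] [Field L] [Algebra K L]
    (n m k : ℕ) (hnm : n ≤ m) (hdim : finrank K L = m)
    (G : Submodule L (Fin n → L)) (hG : G ≠ ⊥) (hk : finrank L G = k)
    (hMRD : VecMinDist K (G : Set (Fin n → L)) (n - k + 1)) :
    VecMinDist K
      ((fun c : Fin n → L => (Fin.snoc c (-∑ i, c i) : Fin (n + 1) → L)) ''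
        (G : Set (Fin n → L))) (n + 1 - k) ∧
    VecMinDist K
      (setDual ((fun c : Fin n → L => (Fin.snoc c (-∑ i, c i) : Fin (n + 1) → L)) ''
        (G : Set (Fin n → L)))) 1 := by
  classical
  obtain ⟨⟨c₀, hc₀G, hc₀ne, hc₀rk⟩, hlb⟩ := hMRD
  have hkn : k ≤ n := by
    rw [← hk]
    simpa using Submodule.finrank_le G
  have key : ∀ c : Fin n → L,
      vrank K (Fin.snoc c (-∑ i, c i) : Fin (n + 1) → L) = vrank K c := fun c => by
    unfold vrank; rw [span_snoc_aux]
  have hsnoc_ne : ∀ c : Fin n → L, c ≠ 0 →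
      (Fin.snoc c (-∑ i, c i) : Fin (n + 1) → L) ≠ 0 := by
    intro c hc h
    apply hc
    funext i
    have := congrFun h (Fin.castSucc i)
    simpa [Fin.snoc_castSucc] using this
  refine ⟨⟨⟨_, ⟨c₀, hc₀G, rfl⟩, hsnoc_ne c₀ hc₀ne, by rw [key, hc₀rk]; omega⟩, ?_⟩, ?_, ?_⟩
  · rintro v ⟨c, hcG, rfl⟩ hvne
    have hcne : c ≠ 0 := by
      rintro rfl
      apply hvne
      funext j
      refine Fin.lastCases ?_ ?_ j
      · simp
      · intro i; simp
    rw [key]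
    have := hlb c hcG hcne
    omega
  · refine ⟨(fun _ => 1 : Fin (n + 1) → L), ?_, ?_, ?_⟩
    · rintro v ⟨c, hcG, rfl⟩
      simp [Fin.sum_univ_castSucc]
    · intro h
      have := congrFun h 0
      simp at this
    · unfold vrank
      rw [Set.range_const, finrank_span_singleton one_ne_zero]
  · rintro w - hw
    exact vrank_pos_of_ne_zero K hw
end

section
/- Let C be an F_q-linear code of n×m matrices of dimension t with m ≠ 1, t ≠ 1, m | t, which is AMRD (rdef(C) = 1). Then there exists an integer t' with m ∤ t' and an F_q-linear subcode C' ≤ C of dimension t' which is also AMRD. -/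
open Module Matrix

set_option synthInstance.maxHeartbeats 1000000 in
/-- If `C` is an AMRD `F_q`-linear matrix code of dimension `t` with `m, t ≠ 1` and
`m ∣ t` (so AMRD means `d = n - t/m`, i.e. `d + t/m = n`), then there is an AMRD
subcode `C' ≤ C` of dimension `t'` with `m ∤ t'` (AMRD: `d' + ⌈t'/m⌉ = n`). -/
theorem AMRD_subcode_not_divisible
    (Fq : Type*) [Field Fq] [Fintype Fq]
    (n m t d : ℕ) (hnm : n ≤ m) (hm1 : m ≠ 1) (ht1 : t ≠ 1) (hmt : m ∣ t)
    (C : Submodule Fq (Matrix (Fin n) (Fin m) Fq))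
    (ht : finrank Fq C = t)
    (hd : MatMinDist (C : Set (Matrix (Fin n) (Fin m) Fq)) d)
    (hAMRD : d + t / m = n) :
    ∃ (t' d' : ℕ) (C' : Submodule Fq (Matrix (Fin n) (Fin m) Fq)),
      C' ≤ C ∧ finrank Fq C' = t' ∧ ¬ m ∣ t' ∧
      MatMinDist (C' : Set (Matrix (Fin n) (Fin m) Fq)) d' ∧
      d' + t' ⌈/⌉ m = n := by
  classical
  obtain ⟨⟨A, hAC, hA0, hAr⟩, hmin⟩ := hd
  -- t ≥ 1
  have hC_ne : C ≠ ⊥ := by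
    intro h
    rw [h] at hAC
    exact hA0 (by simpa using hAC)
  have ht1' : 1 ≤ t := by
    rcases Nat.eq_zero_or_pos t with h | h
    · exact absurd (Submodule.finrank_eq_zero.mp (ht.trans h)) hC_ne
    · exact h
  have hm0 : m ≠ 0 := by
    rintro rfl
    simp only [Nat.zero_dvd] at hmt
    omega
  have hm2 : 2 ≤ m := by omega
  have htm : m ≤ t := Nat.le_of_dvd (by omega) hmt
  have ht2 : 2 ≤ t := by omega
  -- the minimum-rank codeword as an element of C
  set a : C := ⟨A, hAC⟩ with ha_def
  have ha0 : a ≠ 0 := fun h => hA0 (by simpa [ha_def, Subtype.ext_iff] using h)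
  -- the quotient C ⧸ span {a} is nontrivial
  have hsp : finrank Fq (Fq ∙ a) = 1 := finrank_span_singleton ha0
  have hq : finrank Fq (C ⧸ (Fq ∙ a)) = t - 1 := by
    have := Submodule.finrank_quotient_add_finrank (Fq ∙ a)
    rw [hsp, ht] at this
    omega
  have hqnt : Nontrivial (C ⧸ (Fq ∙ a)) := by
    apply Module.nontrivial_of_finrank_pos (R := Fq)
    omega
  obtain ⟨x, hx0⟩ := exists_ne (0 : C ⧸ (Fq ∙ a))
  obtain ⟨f, hf⟩ : ∃ f : Module.Dual Fq (C ⧸ (Fq ∙ a)), f x ≠ 0 := by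
    by_contra h
    push_neg at h
    exact hx0 ((Module.forall_dual_apply_eq_zero_iff Fq x).mp h)
  set φ : C →ₗ[Fq] Fq := f ∘ₗ (Fq ∙ a).mkQ with hφ_def
  have hφ_surj : Function.Surjective φ := by
    intro c
    obtain ⟨y, hy⟩ := (Fq ∙ a).mkQ_surjective x
    refine ⟨(c / f x) • y, ?_⟩
    simp [hφ_def, hy, div_mul_cancel₀ _ hf]
  have hker : finrank Fq (LinearMap.ker φ) = t - 1 := by
    have h1 := LinearMap.finrank_range_add_finrank_ker φ
    have h2 : LinearMap.range φ = ⊤ := LinearMap.range_eq_top.mpr hφ_surj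
    rw [h2, finrank_top, ht] at h1
    have : finrank Fq Fq = 1 := finrank_self Fq
    omega
  have haker : a ∈ LinearMap.ker φ := by
    simp [hφ_def, (Fq ∙ a).mkQ_apply, (Submodule.Quotient.mk_eq_zero _).mpr
      (Submodule.mem_span_singleton_self a)]
  -- the subcode
  set C' : Submodule Fq (Matrix (Fin n) (Fin m) Fq) :=
    Submodule.map C.subtype (LinearMap.ker φ) with hC'_def
  have hC'le : C' ≤ C := by
    rw [hC'_def]
    rintro B ⟨b, _, rfl⟩
    exact b.2
  have hC'rank : finrank Fq C' = t - 1 := by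
    rw [hC'_def, ← hker]
    exact (Submodule.equivMapOfInjective C.subtype (Submodule.injective_subtype C)
      (LinearMap.ker φ)).finrank_eq.symm
  have hAC' : A ∈ C' := ⟨a, haker, rfl⟩
  refine ⟨t - 1, d, C', hC'le, hC'rank, ?_, ⟨⟨A, hAC', hA0, hAr⟩,
    fun B hB hB0 => hmin B (hC'le hB) hB0⟩, ?_⟩
  · intro h
    have h1 : m ∣ t - (t - 1) := Nat.dvd_sub hmt h
    have : t - (t - 1) = 1 := by omega
    rw [this, Nat.dvd_one] at h1
    exact hm1 h1
  · obtain ⟨k, rfl⟩ := hmt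
    have hk1 : 1 ≤ k := Nat.pos_of_ne_zero (fun h => by simp [h] at ht2)
    have hceil : (m * k - 1) ⌈/⌉ m = k := by
      rw [Nat.ceilDiv_eq_add_pred_div]
      have : m * k - 1 + m - 1 = m * k + (m - 2) := by
        have := Nat.le_mul_of_pos_right m hk1
        omega
      rw [this, Nat.mul_add_div (by omega), Nat.div_eq_of_lt (by omega)]
      omega
    rw [hceil]
    rw [Nat.mul_div_cancel_left k (by omega)] at hAMRD
    exact hAMRD
end

section
/- Let C be a nonzero proper F_q-linear code of n×m matrices (n ≤ m) of dimension t with m | t. Then C is dually AMRD if and only if d(C) + d(C^⊥) = n. (Here one uses that when m | t, rdef(C) = 0 implies C is MRD and hence rdef(C^⊥) = 0.) -/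
open Module Matrix

namespace Submodule

variable {K V : Type*} [Field K] [AddCommGroup V] [Module K V] [FiniteDimensional K V]

theorem exists_le_finrank_eq (W : Submodule K V) {s : ℕ} (hWs : finrank K W ≤ s)
    (hs : s ≤ finrank K V) : ∃ W' : Submodule K V, W ≤ W' ∧ finrank K W' = s := by
  obtain ⟨k, rfl⟩ := Nat.exists_eq_add_of_le hWs
  induction k with
  | zero => exact ⟨W, le_rfl, rfl⟩
  | succ k ih =>
    obtain ⟨W', hWW', hW'⟩ := ih (by omega) (by omega)
    obtain ⟨x, hx⟩ := SetLike.exists_not_mem_of_ne_top W' fun h => by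
      rw [h, finrank_top] at hW'
      omega
    exact ⟨W' ⊔ span K {x}, hWW'.trans le_sup_left, by
      rw [finrank_sup_span_singleton hx, hW', add_assoc]⟩

end Submodule

namespace Matrix

variable {K : Type*} [Field K] {ι κ σ : Type*} [Fintype ι] [Fintype κ]

def traceForm : LinearMap.BilinForm K (Matrix ι κ K) :=
  LinearMap.mk₂ K (fun A B => trace (A * Bᵀ))
    (fun A A' B => by rw [Matrix.add_mul, trace_add])
    (fun c A B => by rw [Matrix.smul_mul, trace_smul])
    (fun A B B' => by rw [transpose_add, Matrix.mul_add, trace_add])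
    (fun c A B => by rw [transpose_smul, Matrix.mul_smul, trace_smul])

@[simp]
theorem traceForm_apply (A B : Matrix ι κ K) : traceForm A B = trace (A * Bᵀ) := rfl

theorem traceForm_comm (A B : Matrix ι κ K) : traceForm A B = traceForm B A := by
  rw [traceForm_apply, ← trace_transpose, transpose_mul, transpose_transpose, traceForm_apply]

theorem traceForm_isRefl : (traceForm : LinearMap.BilinForm K (Matrix ι κ K)).IsRefl :=
  fun A B h => traceForm_comm A B ▸ h

theorem traceForm_single [DecidableEq ι] [DecidableEq κ] (A : Matrix ι κ K) (i : ι) (j : κ) :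
    traceForm A (single i j 1) = A i j := by
  simp [transpose_single, trace_mul_single]

theorem traceForm_nondegenerate :
    (traceForm : LinearMap.BilinForm K (Matrix ι κ K)).Nondegenerate := by
  classical
  have hleft : ∀ A : Matrix ι κ K, (∀ B, traceForm A B = 0) → A = 0 := fun A h => by
    ext i j
    simpa [h] using (traceForm_single A i j).symm
  exact ⟨hleft, fun B h => hleft B fun A => traceForm_comm B A ▸ h A⟩

theorem traceForm_transpose_mul [Fintype σ] (P : Matrix ι σ K) (B : Matrix σ κ K)
    (A : Matrix ι κ K) :
    traceForm B (Pᵀ * A) = traceForm (P * B) A := by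
  rw [traceForm_apply, traceForm_apply, transpose_mul, transpose_transpose, ← Matrix.mul_assoc,
    trace_mul_comm, Matrix.mul_assoc]

theorem exists_mul_eq_of_rank_le (B : Matrix ι κ K) {s : ℕ} (hB : B.rank ≤ s)
    (hs : s ≤ Fintype.card ι) :
    ∃ (P : Matrix ι (Fin s) K) (B' : Matrix (Fin s) κ K), P.rank = s ∧ P * B' = B := by
  classical
  obtain ⟨W, hBW, hW⟩ :=
    (LinearMap.range B.mulVecLin).exists_le_finrank_eq hB (by simpa using hs)
  let e : W ≃ₗ[K] (Fin s → K) := LinearEquiv.ofFinrankEq _ _ (by simpa using hW)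
  let f : (Fin s → K) →ₗ[K] ι → K := W.subtype ∘ₗ e.symm.toLinearMap
  let g : (κ → K) →ₗ[K] Fin s → K :=
    e.toLinearMap ∘ₗ B.mulVecLin.codRestrict W fun v => hBW ⟨v, rfl⟩
  refine ⟨LinearMap.toMatrix' f, LinearMap.toMatrix' g, ?_, ?_⟩
  · rw [rank, ← toLin'_apply', toLin'_toMatrix',
      LinearMap.finrank_range_of_inj (Subtype.val_injective.comp e.symm.injective)]
    simp
  · rw [← LinearMap.toMatrix'_comp]
    convert LinearMap.toMatrix'_toLin' B
    ext v
    simp [f, g]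

theorem injective_mulLeftLinearMap_transpose_domRestrict [Fintype σ]
    (C : Submodule K (Matrix ι κ K)) (P : Matrix ι σ K)
    (hC : ∀ A ∈ C, A ≠ 0 → Fintype.card ι < A.rank + P.rank) :
    Function.Injective ((mulLeftLinearMap κ K Pᵀ).domRestrict C) := by
  refine (injective_iff_map_eq_zero _).mpr fun A hA => ?_
  have hPA : Pᵀ * A.1 = 0 := hA
  have hrank := rank_add_rank_le_card_of_mul_eq_zero hPA
  rw [rank_transpose] at hrank
  by_contra hA0
  have := hC A A.2 (by simpa using hA0)
  omega

theorem finrank_le_mul_of_forall_lt_rank_add (C : Submodule K (Matrix ι κ K)) {s : ℕ}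
    (hC : ∀ A ∈ C, A ≠ 0 → Fintype.card ι < A.rank + s) :
    finrank K C ≤ s * Fintype.card κ := by
  rcases le_or_gt s (Fintype.card ι) with hs | hs
  · obtain ⟨P, -, hP, -⟩ := exists_mul_eq_of_rank_le (0 : Matrix ι κ K) (by simp) hs
    calc finrank K C ≤ finrank K (Matrix (Fin s) κ K) :=
          LinearMap.finrank_le_finrank_of_injective
            (injective_mulLeftLinearMap_transpose_domRestrict C P (by rwa [hP]))
      _ = s * Fintype.card κ := by simp [Module.finrank_matrix]
  · calc finrank K C ≤ finrank K (Matrix ι κ K) := C.finrank_le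
      _ = Fintype.card ι * Fintype.card κ := by simp [Module.finrank_matrix]
      _ ≤ s * Fintype.card κ := by gcongr

theorem lt_rank_of_mem_orthogonal (C : Submodule K (Matrix ι κ K)) {s : ℕ}
    (hs : s ≤ Fintype.card ι) (hdim : finrank K C = s * Fintype.card κ)
    (hC : ∀ A ∈ C, A ≠ 0 → Fintype.card ι < A.rank + s) {B : Matrix ι κ K}
    (hB : B ∈ traceForm.orthogonal C) (hB0 : B ≠ 0) : s < B.rank := by
  by_contra! hBs
  obtain ⟨P, B', hP, rfl⟩ := exists_mul_eq_of_rank_le B hBs hs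
  have hinj := injective_mulLeftLinearMap_transpose_domRestrict C P (by rwa [hP])
  have hsurj := (LinearMap.injective_iff_surjective_of_finrank_eq_finrank
    (by simp [hdim, Module.finrank_matrix])).mp hinj
  have hB' : B' = 0 := traceForm_nondegenerate.1 B' fun X => by
    obtain ⟨A, rfl⟩ := hsurj X
    rw [LinearMap.domRestrict_apply, mulLeftLinearMap_apply, traceForm_transpose_mul,
      traceForm_comm]
    exact hB A A.2
  exact hB0 (by rw [hB', Matrix.mul_zero])

end Matrix

theorem matDual_eq_orthogonal {Fq : Type*} [Field Fq] {n m : ℕ}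
    (C : Submodule Fq (Matrix (Fin n) (Fin m) Fq)) : matDual C = traceForm.orthogonal C := by
  ext B
  exact forall₂_congr fun A _ => by rw [← traceForm_apply, traceForm_comm]

namespace MatMinDist

variable {K : Type*} [Field K] {n m d dp s : ℕ}

theorem width_pos {S : Set (Matrix (Fin n) (Fin m) K)} (hd : MatMinDist S d) : 0 < m := by
  obtain ⟨⟨A, -, hA0, -⟩, -⟩ := hd
  exact Nat.pos_of_ne_zero fun hm => hA0 (by subst hm; ext i j; exact j.elim0)

variable {C : Submodule K (Matrix (Fin n) (Fin m) K)}

theorem singleton_bound (hd : MatMinDist (C : Set (Matrix (Fin n) (Fin m) K)) d)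
    (hdim : finrank K C = s * m) : d + s ≤ n + 1 := by
  have hm := hd.width_pos
  obtain ⟨⟨A₀, -, -, rfl⟩, hmin⟩ := hd
  have hC := finrank_le_mul_of_forall_lt_rank_add C (s := n + 1 - A₀.rank) fun A hA hA0 => by
    have := hmin A hA hA0
    simp only [Fintype.card_fin]
    omega
  rw [hdim, Fintype.card_fin] at hC
  have := Nat.le_of_mul_le_mul_right hC hm
  have := A₀.rank_le_height
  omega

theorem lt_of_orthogonal (hd : MatMinDist (C : Set (Matrix (Fin n) (Fin m) K)) d)
    (hdim : finrank K C = s * m) (hds : d + s = n + 1)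
    (hdp : MatMinDist (traceForm.orthogonal C : Set (Matrix (Fin n) (Fin m) K)) dp) :
    s < dp := by
  obtain ⟨⟨B₀, hB₀, hB₀0, rfl⟩, -⟩ := hdp
  have hsn : s ≤ n := Nat.le_of_mul_le_mul_right
    (hdim ▸ C.finrank_le.trans_eq (by simp [Module.finrank_matrix])) hd.width_pos
  refine lt_rank_of_mem_orthogonal C (by simpa) (by simpa) (fun A hA hA0 => ?_) hB₀ hB₀0
  have := hd.2 A hA hA0
  simp only [Fintype.card_fin]
  omega

end MatMinDist

theorem dually_AMRD_iff_distance_sum_general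
    (Fq : Type*) [Field Fq]
    (n m t d dp : ℕ) (hmt : m ∣ t)
    (C : Submodule Fq (Matrix (Fin n) (Fin m) Fq))
    (ht : finrank Fq C = t)
    (hd : MatMinDist (C : Set (Matrix (Fin n) (Fin m) Fq)) d)
    (hdp : MatMinDist (matDual C) dp) :
    (d + t / m = n ∧ dp + (n * m - t) / m = n) ↔ d + dp = n := by
  rw [matDual_eq_orthogonal] at hdp
  have hd' : MatMinDist (traceForm.orthogonal (traceForm.orthogonal C) :
      Set (Matrix (Fin n) (Fin m) Fq)) d := by
    rwa [LinearMap.BilinForm.orthogonal_orthogonal traceForm_nondegenerate traceForm_isRefl]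
  have hm := hd.width_pos
  obtain ⟨k, rfl⟩ := hmt
  have hCdim : finrank Fq C = k * m := by rw [ht, mul_comm]
  have hDdim : finrank Fq (traceForm.orthogonal C) = (n - k) * m := by
    rw [LinearMap.BilinForm.finrank_orthogonal traceForm_nondegenerate, hCdim, Nat.sub_mul]
    simp [Module.finrank_matrix]
  rw [Nat.mul_div_cancel_left k hm, mul_comm m k, ← Nat.sub_mul, Nat.mul_div_cancel _ hm]
  have hC_singleton := hd.singleton_bound hCdim
  have hD_singleton := hdp.singleton_bound hDdim
  have hC_MRD := fun h => hd.lt_of_orthogonal hCdim h hdp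
  have hD_MRD := fun h => hdp.lt_of_orthogonal hDdim h hd'
  omega

/-- If `m ∣ t`, a nonzero proper code `C` is dually AMRD iff `d + d^⊥ = n`.
Here dually AMRD is expressed as `rdef(C) = rdef(C^⊥) = 1`, i.e.
`d + t/m = n` and `d^⊥ + (nm - t)/m = n`. One assumes the known fact that for
`m ∣ t`, `rdef(C) = 0` (i.e. `C` is MRD) implies `rdef(C^⊥) = 0`. -/
theorem dually_AMRD_iff_distance_sum
    (Fq : Type*) [Field Fq] [Fintype Fq]
    (n m t d dp : ℕ) (hnm : n ≤ m) (hmt : m ∣ t)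
    (C : Submodule Fq (Matrix (Fin n) (Fin m) Fq)) (hC0 : C ≠ ⊥) (hC1 : C ≠ ⊤)
    (ht : finrank Fq C = t)
    (hd : MatMinDist (C : Set (Matrix (Fin n) (Fin m) Fq)) d)
    (hdp : MatMinDist (matDual C) dp)
    (hMRDfact : d + t / m = n + 1 → dp + (n * m - t) / m = n + 1) :
    (d + t / m = n ∧ dp + (n * m - t) / m = n) ↔ d + dp = n :=
  dually_AMRD_iff_distance_sum_general Fq n m t d dp hmt C ht hd hdp
end

section
/- Let C be a t-dimensional F_q-linear code of n×m matrices whose generalized weights satisfy a_r(C) ≤ a_{r+1}(C), a_r(C) < a_{r+m}(C), and a_r(C) ≤ n - ⌊(t-r)/m⌋ for all valid r. If a_r(C) = n - ⌊(t-r)/m⌋ for r = 1 + (i-1)m with 1 ≤ i ≤ ⌈t/m⌉ - 1, then a_{r+m}(C) = n - ⌊(t-(r+m))/m⌋. -/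
open Module Matrix

/-- **`i`-MRD implies `(i+1)`-MRD.** Let `C` be a `t`-dimensional `F_q`-linear
code of `n × m` matrices whose generalized weights `a r` satisfy weak
monotonicity, strict increase by steps of `m`, and the generalized Singleton
bound `a r ≤ n - ⌊(t - r)/m⌋`. If `a r = n - ⌊(t - r)/m⌋` for `r = 1 + (i-1)m`
with `1 ≤ i ≤ ⌈t/m⌉ - 1`, then `a (r + m) = n - ⌊(t - (r + m))/m⌋`. -/
theorem iMRD_implies_succ_MRD
    (Fq : Type*) [Field Fq] [Fintype Fq]
    (n m t : ℕ) (hm : 0 < m)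
    (C : Submodule Fq (Matrix (Fin n) (Fin m) Fq)) (ht : finrank Fq C = t)
    (a : ℕ → ℕ)
    (hmono : ∀ r, 1 ≤ r → r < t → a r ≤ a (r + 1))
    (hstrict : ∀ r, 1 ≤ r → r + m ≤ t → a r < a (r + m))
    (hbound : ∀ r, 1 ≤ r → r ≤ t → a r ≤ n - (t - r) / m)
    (i : ℕ) (hi1 : 1 ≤ i) (hi2 : i ≤ t ⌈/⌉ m - 1)
    (hMRD : a (1 + (i - 1) * m) = n - (t - (1 + (i - 1) * m)) / m) :
    a (1 + (i - 1) * m + m) = n - (t - (1 + (i - 1) * m + m)) / m := by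
  set r := 1 + (i - 1) * m with hr
  have hcd : t ⌈/⌉ m = (t + m - 1) / m := Nat.ceilDiv_eq_add_pred_div t m
  -- i + 1 ≤ ⌈t/m⌉
  have hcd2 : 2 ≤ (t + m - 1) / m := by omega
  have hi' : i + 1 ≤ (t + m - 1) / m := by omega
  have hmul : (i + 1) * m ≤ t + m - 1 := (Nat.le_div_iff_mul_le hm).mp hi'
  have him : m ≤ i * m := Nat.le_mul_of_pos_left m hi1
  have hsub : (i - 1) * m = i * m - m := by rw [Nat.sub_one_mul]
  have hrm : r + m ≤ t := by
    have : (i + 1) * m = i * m + m := by ring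
    omega
  have hq : (t - r) / m = (t - (r + m)) / m + 1 := by
    have hx : t - r = (t - (r + m)) + m := by omega
    rw [hx, Nat.add_div_right _ hm]
  have h1 : a r < a (r + m) := hstrict r (by omega) hrm
  have h2 : a (r + m) ≤ n - (t - (r + m)) / m := hbound (r + m) (by omega) hrm
  omega
end

section
/- Let C ≤ F_{q^m}^n be an F_{q^m}-linear [n,k] code with M_k(C) = n. Then for 1 ≤ i ≤ k, the i-th generalized weight attains the Singleton bound M_i(C) = n - k + i if and only if k - i + 2 ≤ M_1(C^⊥); moreover M_i(C) = n - k + i with M_{i-1}(C) < n - k + i - 1 (degree exactly i-1) if and only if M_1(C^⊥) = k - i + 2. -/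
/-- Chain lemma: a function strictly increasing on `[1, K]` grows at least by one per step. -/
lemma iMRD_chain_aux (f : ℕ → ℕ) (K : ℕ)
    (hmono : ∀ r, 1 ≤ r → r < K → f r < f (r + 1)) :
    ∀ a, 1 ≤ a → ∀ b, a ≤ b → b ≤ K → f a + (b - a) ≤ f b := by
  intro a ha b
  induction b with
  | zero => intro h1 h2; omega
  | succ b ih =>
    intro hab hbk
    rcases Nat.lt_or_ge a (b + 1) with h | h
    · have h1 := ih (by omega) (by omega)
      have h2 := hmono b (by omega) (by omega)
      omega
    · have : a = b + 1 := by omega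
      subst this
      omega

/-- **Characterization of `i`-MRD codes via the dual distance.** Let `M`, `Mp` be
the generalized rank weights of an `[n, k]` `F_{q^m}`-linear code `C` and its
dual (with the standard properties and Wei-type duality), and assume
`M_k(C) = n`. Then for `1 ≤ i ≤ k`: `M_i(C) = n - k + i` iff
`k - i + 2 ≤ M_1(C^⊥)`; moreover `i` is the *minimal* index with
`M_i(C) = n - k + i` (degree exactly `i - 1`) iff `M_1(C^⊥) = k - i + 2`. -/
theorem iMRD_iff_dual_dist
    (n k : ℕ) (hk1 : 1 ≤ k) (hkn : k < n)
    (M Mp : ℕ → ℕ)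
    (hM1 : 1 ≤ M 1) (hMp1 : 1 ≤ Mp 1)
    (hMmono : ∀ r, 1 ≤ r → r < k → M r < M (r + 1))
    (hMpmono : ∀ r, 1 ≤ r → r < n - k → Mp r < Mp (r + 1))
    (hMbound : ∀ r, 1 ≤ r → r ≤ k → M r ≤ n - k + r)
    (hMpbound : ∀ r, 1 ≤ r → r ≤ n - k → Mp r ≤ k + r)
    (hMpnk : Mp (n - k) ≤ n)
    (hdual : Finset.image M (Finset.Icc 1 k) =
      Finset.Icc 1 n \ Finset.image (fun j => n + 1 - Mp j) (Finset.Icc 1 (n - k)))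
    (hMk : M k = n)
    (i : ℕ) (hi1 : 1 ≤ i) (hik : i ≤ k) :
    (M i = n - k + i ↔ k - i + 2 ≤ Mp 1) ∧
    ((M i = n - k + i ∧ ∀ j, 1 ≤ j → j < i → M j ≠ n - k + j) ↔
      Mp 1 = k - i + 2) := by
  have chain := iMRD_chain_aux M k hMmono
  have chainp := iMRD_chain_aux Mp (n - k) hMpmono
  have Mp1le : Mp 1 ≤ k + 1 := hMpbound 1 le_rfl (by omega)
  have hd : ∀ v, (∃ j, (1 ≤ j ∧ j ≤ k) ∧ M j = v) ↔
      ((1 ≤ v ∧ v ≤ n) ∧ ¬∃ j, (1 ≤ j ∧ j ≤ n - k) ∧ n + 1 - Mp j = v) := by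
    intro v
    have h := Finset.ext_iff.mp hdual v
    simpa [Finset.mem_image, Finset.mem_sdiff, Finset.mem_Icc] using h
  have fact1 : ∀ a b, 1 ≤ a → a ≤ b → b ≤ k → M a = n - k + a → M b = n - k + b := by
    intro a b ha hab hbk hMa
    have h1 := chain a ha b hab hbk
    have h2 := hMbound b (by omega) hbk
    omega
  have dir2 : ∀ i, 1 ≤ i → i ≤ k → M i = n - k + i → k - i + 2 ≤ Mp 1 := by
    intro i hi hik hMi
    have hvMp : ∃ j, (1 ≤ j ∧ j ≤ n - k) ∧ n + 1 - Mp j = n + 1 - Mp 1 :=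
      ⟨1, ⟨le_rfl, by omega⟩, rfl⟩
    have hvnotM : ¬∃ j, (1 ≤ j ∧ j ≤ k) ∧ M j = n + 1 - Mp 1 := by
      intro hc
      exact ((hd _).mp hc).2 hvMp
    by_contra hcon
    have hvge : n - k + i ≤ n + 1 - Mp 1 := by omega
    have hj : M (n + 1 - Mp 1 - (n - k)) = n + 1 - Mp 1 := by
      have := fact1 i (n + 1 - Mp 1 - (n - k)) hi (by omega) (by omega) hMi
      omega
    exact hvnotM ⟨n + 1 - Mp 1 - (n - k), ⟨by omega, by omega⟩, hj⟩
  have dir1 : ∀ i, 1 ≤ i → i ≤ k → k - i + 2 ≤ Mp 1 → M i = n - k + i := by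
    suffices h : ∀ d i, 1 ≤ i → i + d = k → k - i + 2 ≤ Mp 1 → M i = n - k + i by
      intro i hi hik hmp; exact h (k - i) i hi (by omega) hmp
    intro d
    induction d with
    | zero =>
      intro i hi hik _
      have : i = k := by omega
      subst this
      omega
    | succ d ih =>
      intro i hi hik hmp
      have hnext : M (i + 1) = n - k + (i + 1) := ih (i + 1) (by omega) (by omega) (by omega)
      have hlt := hMmono i hi (by omega)
      by_contra hcon
      have hub := hMbound i hi (by omega)
      have hvnot : ¬∃ j, (1 ≤ j ∧ j ≤ k) ∧ M j = n - k + i := by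
        rintro ⟨j, ⟨hj1, hjk⟩, hMj⟩
        rcases le_or_gt j i with h | h
        · have := chain j hj1 i h (by omega)
          omega
        · have := chain (i + 1) (by omega) j h (by omega)
          omega
      have hnrhs : ¬((1 ≤ n - k + i ∧ n - k + i ≤ n) ∧
          ¬∃ j, (1 ≤ j ∧ j ≤ n - k) ∧ n + 1 - Mp j = n - k + i) :=
        fun h => hvnot ((hd _).mpr h)
      have hex : ∃ j, (1 ≤ j ∧ j ≤ n - k) ∧ n + 1 - Mp j = n - k + i := by
        by_contra hne
        exact hnrhs ⟨⟨by omega, by omega⟩, hne⟩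
      obtain ⟨j, ⟨hj1, hjnk⟩, hMpj⟩ := hex
      have := chainp 1 le_rfl j hj1 hjnk
      omega
  constructor
  · exact ⟨dir2 i hi1 hik, dir1 i hi1 hik⟩
  constructor
  · rintro ⟨hMi, hmin⟩
    have h1 := dir2 i hi1 hik hMi
    rcases Nat.eq_or_lt_of_le hi1 with h | h
    · subst h
      omega
    · have h2 : M (i - 1) ≠ n - k + (i - 1) := hmin (i - 1) (by omega) (by omega)
      have h3 : ¬(k - (i - 1) + 2 ≤ Mp 1) :=
        fun hc => h2 (dir1 (i - 1) (by omega) (by omega) hc)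
      omega
  · intro hmp
    refine ⟨dir1 i hi1 hik (by omega), ?_⟩
    intro j hj1 hji hMj
    have := dir2 j hj1 (by omega) hMj
    omega
end

section
/- Let C ≤ F_{q^m}^n be an F_{q^m}-linear [n,k,d] code with M_k(C) = n and rdef(C) ≥ 1. Then C^⊥ is AMRD (i.e. rdef(C^⊥) = k + 1 - d(C^⊥) = 1) if and only if M_2(C) = d + rdef(C) + 1. In particular, if C is AMRD (rdef(C) = 1), then C is dually AMRD if and only if M_2(C) = d + 2. -/
/-- Strict-monotonicity helper: step-wise strict increase gives growth. -/
lemma grw_aux (k : ℕ) (M : ℕ → ℕ) (h : ∀ r, 1 ≤ r → r < k → M r < M (r + 1)) :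
    ∀ a b, 1 ≤ a → a ≤ b → b ≤ k → M a + (b - a) ≤ M b := by
  intro a b ha hab hbk
  induction b with
  | zero => omega
  | succ b ih =>
    rcases Nat.lt_or_ge a (b + 1) with h1 | h1
    · have hab' : a ≤ b := by omega
      have := ih hab' (by omega)
      have := h b (by omega) (by omega)
      omega
    · have : a = b + 1 := by omega
      subst this; omega

/-- Let `M`, `Mp` be the generalized rank weights of an `[n, k, d]`
`F_{q^m}`-linear code `C` (`d = M 1`) and of its dual, satisfying the standard
properties and Wei-type duality. Assume `M_k(C) = n` and `rdef(C) ≥ 1` (i.e.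
`d + k ≤ n`, where `rdef(C) = n - k + 1 - d`). Then `C^⊥` is AMRD
(`rdef(C^⊥) = k + 1 - M_1(C^⊥) = 1`, i.e. `M_1(C^⊥) = k`) iff
`M_2(C) = d + rdef(C) + 1`. In particular, if `C` is AMRD (`d = n - k`), then
`C` is dually AMRD iff `M_2(C) = d + 2`. -/
theorem dual_AMRD_iff_M2
    (n k : ℕ) (hk1 : 1 ≤ k) (hkn : k < n)
    (M Mp : ℕ → ℕ)
    (hM1 : 1 ≤ M 1) (hMp1 : 1 ≤ Mp 1)
    (hMmono : ∀ r, 1 ≤ r → r < k → M r < M (r + 1))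
    (hMpmono : ∀ r, 1 ≤ r → r < n - k → Mp r < Mp (r + 1))
    (hMbound : ∀ r, 1 ≤ r → r ≤ k → M r ≤ n - k + r)
    (hMpbound : ∀ r, 1 ≤ r → r ≤ n - k → Mp r ≤ k + r)
    (hMpnk : Mp (n - k) ≤ n)
    (hdual : Finset.image M (Finset.Icc 1 k) =
      Finset.Icc 1 n \ Finset.image (fun j => n + 1 - Mp j) (Finset.Icc 1 (n - k)))
    (hMk : M k = n)
    (hrdef : M 1 + k ≤ n) :
    (Mp 1 = k ↔ M 2 = M 1 + (n - k + 1 - M 1) + 1) ∧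
    (M 1 + k = n → (Mp 1 = k ↔ M 2 = M 1 + 2)) := by
  have hMgrow := grw_aux k M hMmono
  have hMpgrow := grw_aux (n - k) Mp hMpmono
  -- k ≥ 2
  have hk2 : 2 ≤ k := by
    by_contra h
    have hk : k = 1 := by omega
    rw [hk] at hMk
    omega
  have hd : M 1 ≤ n - k := by omega
  set T : Finset ℕ := Finset.image (fun j => n + 1 - Mp j) (Finset.Icc 1 (n - k)) with hT
  have key : Mp 1 = k ↔ M 2 = n - k + 2 := by
    constructor
    · -- forward
      intro hMpk
      have hM2le : M 2 ≤ n - k + 2 := hMbound 2 (by omega) hk2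
      by_contra hne
      have h12 : M 1 + 1 ≤ M 2 := by have := hMgrow 1 2 le_rfl (by omega) hk2; omega
      have hM2 : M 2 ≤ n - k + 1 := by omega
      -- T ⊆ Icc 1 (n-k+1) \ {M 1, M 2}
      have hM12S : ∀ x, x = M 1 ∨ x = M 2 → x ∈ Finset.image M (Finset.Icc 1 k) := by
        intro x hx
        rcases hx with hx | hx <;> subst hx <;>
          exact Finset.mem_image.mpr ⟨_, Finset.mem_Icc.mpr (by omega), rfl⟩
      have hTsub : T ⊆ Finset.Icc 1 (n - k + 1) \ {M 1, M 2} := by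
        intro x hx
        obtain ⟨j, hj, hxj⟩ := Finset.mem_image.mp hx
        have hxj : n + 1 - Mp j = x := hxj
        rw [Finset.mem_Icc] at hj
        have hMjk : k ≤ Mp j := by
          rcases Nat.eq_or_lt_of_le hj.1 with h1 | h1
          · subst h1; omega
          · have := hMpgrow 1 j le_rfl (by omega) hj.2; omega
        have hMjn : Mp j ≤ n := by have := hMpbound j hj.1 hj.2; omega
        have hx1 : 1 ≤ x := by omega
        have hx2 : x ≤ n - k + 1 := by omega
        have hxnotS : x ∉ Finset.image M (Finset.Icc 1 k) := by
          rw [hdual]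
          intro hmem
          exact (Finset.mem_sdiff.mp hmem).2 hx
        rw [Finset.mem_sdiff, Finset.mem_Icc]
        refine ⟨⟨hx1, hx2⟩, ?_⟩
        intro hxm
        rw [Finset.mem_insert, Finset.mem_singleton] at hxm
        exact hxnotS (hM12S x hxm)
      -- cardinalities
      have hM1ne2 : M 1 ≠ M 2 := by
        have := hMgrow 1 2 le_rfl (by omega) hk2; omega
      have hcardpair : ({M 1, M 2} : Finset ℕ).card = 2 := by
        rw [Finset.card_insert_of_notMem (by simpa using hM1ne2), Finset.card_singleton]
      have hpairsub : ({M 1, M 2} : Finset ℕ) ⊆ Finset.Icc 1 (n - k + 1) := by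
        intro x hx
        rw [Finset.mem_insert, Finset.mem_singleton] at hx
        rw [Finset.mem_Icc]
        rcases hx with hx | hx <;> subst hx <;> omega
      have hcardT : T.card ≤ n - k - 1 := by
        have := Finset.card_le_card hTsub
        rw [Finset.card_sdiff_of_subset hpairsub, hcardpair, Nat.card_Icc] at this
        omega
      have hScard : (Finset.image M (Finset.Icc 1 k)).card = k := by
        rw [Finset.card_image_of_injOn, Nat.card_Icc]
        · omega
        · intro a ha b hb hab
          rw [Finset.mem_coe, Finset.mem_Icc] at ha hb
          by_contra hne'
          rcases Nat.lt_or_ge a b with h1 | h1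
          · have := hMgrow a b ha.1 (by omega) hb.2; omega
          · have := hMgrow b a hb.1 (by omega) ha.2; omega
      have hunion : (Finset.Icc 1 n \ T).card + T.card = (Finset.Icc 1 n ∪ T).card :=
        Finset.card_sdiff_add_card _ _
      have hge : n ≤ (Finset.Icc 1 n ∪ T).card := by
        have := Finset.card_le_card (Finset.subset_union_left (s₁ := Finset.Icc 1 n) (s₂ := T))
        rw [Nat.card_Icc] at this
        omega
      rw [hdual] at hScard
      omega
    · -- backward
      intro hM2
      have hMall : ∀ r, 2 ≤ r → r ≤ k → M r = n - k + r := by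
        intro r h2 hrk
        have h1 := hMbound r (by omega) hrk
        have h2' := hMgrow 2 r (by omega) h2 hrk
        omega
      have hnotS : (n - k + 1) ∉ Finset.image M (Finset.Icc 1 k) := by
        intro hmem
        obtain ⟨r, hr, hrm⟩ := Finset.mem_image.mp hmem
        rw [Finset.mem_Icc] at hr
        rcases Nat.lt_or_ge r 2 with h1 | h1
        · have : r = 1 := by omega
          subst this; omega
        · have := hMall r h1 hr.2; omega
      have hinT : (n - k + 1) ∈ T := by
        have hIcc : (n - k + 1) ∈ Finset.Icc 1 n := Finset.mem_Icc.mpr (by omega)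
        by_contra hnot
        exact hnotS (hdual ▸ Finset.mem_sdiff.mpr ⟨hIcc, hnot⟩)
      obtain ⟨j, hj, hje⟩ := Finset.mem_image.mp hinT
      have hje : n + 1 - Mp j = n - k + 1 := hje
      rw [Finset.mem_Icc] at hj
      have hMjn : Mp j ≤ n := by have := hMpbound j hj.1 hj.2; omega
      have hMpjk : Mp j = k := by omega
      have hMp1le : Mp 1 ≤ k := by
        rcases Nat.eq_or_lt_of_le hj.1 with h1 | h1
        · subst h1; omega
        · have := hMpgrow 1 j le_rfl (by omega) hj.2; omega
      by_contra hne
      have hMp1lt : Mp 1 < k := by omega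
      set x := n + 1 - Mp 1 with hx
      have hxT : x ∈ T :=
        Finset.mem_image.mpr ⟨1, Finset.mem_Icc.mpr (by omega), rfl⟩
      have hxS : x ∈ Finset.image M (Finset.Icc 1 k) := by
        refine Finset.mem_image.mpr ⟨x - (n - k), Finset.mem_Icc.mpr (by omega), ?_⟩
        have := hMall (x - (n - k)) (by omega) (by omega)
        omega
      rw [hdual] at hxS
      exact (Finset.mem_sdiff.mp hxS).2 hxT
  constructor
  · rw [key]; constructor <;> intro h <;> omega
  · intro hMk'
    rw [key]; constructor <;> intro h <;> omega
end
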